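/- arXiv:1103.2200 — 8 statements merged into one kernel-verified Lean document; each statement's English description precedes it below -/
import Mathlib

section
/- Let X = (X_n, β_n) be a complex of left R-modules, and suppose that for every n ∈ ℤ a monomorphism φ_n : P_n → X_n is given which is an X-precover of X_n, where 𝒳 is a class of R-modules. Then there exist differentials λ_n : P_n → P_{n-1} making P = (P_n, λ_n) a complex of R-modules such that the family (φ_n) is a monic chain map from P to X. -/
open CategoryTheory Limits DirectSum

/-- `φ : P ⟶ M` is a `Y`-precover of `M`: `P` belongs to the class `Y` and every morphism
to `M` from an object of `Y` factors through `φ`. -/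
def IsPrecover {C : Type*} [Category C] (Y : C → Prop) {P M : C} (φ : P ⟶ M) : Prop :=
  Y P ∧ ∀ (P' : C), Y P' → ∀ f : P' ⟶ M, ∃ g : P' ⟶ P, g ≫ φ = f

/-- A `Y`-cover is a `Y`-precover such that every compatible endomorphism is an automorphism. -/
def IsCover {C : Type*} [Category C] (Y : C → Prop) {P M : C} (φ : P ⟶ M) : Prop :=
  IsPrecover Y φ ∧ ∀ h : P ⟶ P, h ≫ φ = φ → IsIso h

/-- `φ : M ⟶ E` is a `Y`-preenvelope of `M`: `E` belongs to the class `Y` and every morphism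
from `M` to an object of `Y` factors through `φ`. -/
def IsPreenvelope {C : Type*} [Category C] (Y : C → Prop) {M E : C} (φ : M ⟶ E) : Prop :=
  Y E ∧ ∀ (E' : C), Y E' → ∀ f : M ⟶ E', ∃ g : E ⟶ E', φ ≫ g = f

/-- A `Y`-envelope is a `Y`-preenvelope such that every compatible endomorphism is an
automorphism. -/
def IsEnvelope {C : Type*} [Category C] (Y : C → Prop) {M E : C} (φ : M ⟶ E) : Prop :=
  IsPreenvelope Y φ ∧ ∀ h : E ⟶ E, φ ≫ h = φ → IsIso h

/-- The class `C(𝒳*)` of `𝒳*`-complexes: complexes all of whose components lie in `𝒳`. -/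
def XStar {R : Type} [Ring R] (𝒳 : ModuleCat.{0} R → Prop) {c : ComplexShape ℤ}
    (K : HomologicalComplex (ModuleCat.{0} R) c) : Prop :=
  ∀ n : ℤ, 𝒳 (K.X n)

/-- if each `φ n : P n ⟶ X.X n` is a monic `𝒳`-precover, then there are
differentials making `P` a complex such that `(φ n)` is a (monic) chain map `P ⟶ X`. -/
theorem stmt_0 {R : Type} [Ring R] (𝒳 : ModuleCat.{0} R → Prop)
    (X : ChainComplex (ModuleCat.{0} R) ℤ)
    (P : ℤ → ModuleCat.{0} R) (φ : ∀ n : ℤ, P n ⟶ X.X n)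
    (hmono : ∀ n : ℤ, Mono (φ n)) (hpre : ∀ n : ℤ, IsPrecover 𝒳 (φ n)) :
    ∃ lam : ∀ n : ℤ, P n ⟶ P (n - 1),
      (∀ n : ℤ, lam n ≫ lam (n - 1) = 0) ∧
      (∀ n : ℤ, lam n ≫ φ (n - 1) = φ n ≫ X.d n (n - 1)) := by
  choose lam hlam using fun n => (hpre (n - 1)).2 (P n) (hpre n).1 (φ n ≫ X.d n (n - 1))
  refine ⟨lam, fun n => ?_, hlam⟩
  have := hmono (n - 1 - 1)
  rw [← cancel_mono (φ (n - 1 - 1)), Category.assoc, hlam, zero_comp,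
    ← Category.assoc, hlam, Category.assoc, X.d_comp_d, comp_zero]
end

section
/- If every left R-module has a monic 𝒳-precover, then every complex of left R-modules has a monic C(𝒳*)-precover (a C(𝒳*)-precover which is a monomorphism of complexes). -/
open CategoryTheory Limits DirectSum

/-- if every module has a monic `𝒳`-precover, then every complex has a monic
`C(𝒳*)`-precover. -/
theorem stmt_1 {R : Type} [Ring R] (𝒳 : ModuleCat.{0} R → Prop)
    (h : ∀ M : ModuleCat.{0} R, ∃ (P : ModuleCat.{0} R) (φ : P ⟶ M),
      Mono φ ∧ IsPrecover 𝒳 φ)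
    (X : ChainComplex (ModuleCat.{0} R) ℤ) :
    ∃ (P : ChainComplex (ModuleCat.{0} R) ℤ) (φ : P ⟶ X),
      Mono φ ∧ IsPrecover (XStar 𝒳) φ := by
  choose P φ mono pre using h
  choose g hg using fun (M Q : ModuleCat.{0} R) (hQ : 𝒳 Q) (f : Q ⟶ M) => (pre M).2 Q hQ f
  have hPX : ∀ M, 𝒳 (P M) := fun M => (pre M).1
  let K : ChainComplex (ModuleCat.{0} R) ℤ :=
    { X := fun n => P (X.X n)
      d := fun i j => g (X.X j) (P (X.X i)) (hPX _) (φ (X.X i) ≫ X.d i j)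
      shape := fun i j hij => by
        haveI := mono (X.X j)
        rw [← cancel_mono (φ (X.X j)), hg, X.shape i j hij, comp_zero, zero_comp]
      d_comp_d' := fun i j k _ _ => by
        haveI := mono (X.X k)
        rw [← cancel_mono (φ (X.X k)), Category.assoc, hg, zero_comp,
          ← Category.assoc, hg, Category.assoc, HomologicalComplex.d_comp_d, comp_zero] }
  let Φ : K ⟶ X :=
    { f := fun n => φ (X.X n)
      comm' := fun i j _ => (hg _ _ _ _).symm }
  refine ⟨K, Φ, ?_, fun n => hPX _, ?_⟩
  · constructor
    intro W u v huv
    apply HomologicalComplex.hom_ext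
    intro n
    haveI := mono (X.X n)
    rw [← cancel_mono (φ (X.X n))]
    have := congrArg (fun (w : W ⟶ X) => w.f n) huv
    simpa using this
  · intro P' hP' f
    refine ⟨{ f := fun n => g (X.X n) (P'.X n) (hP' n) (f.f n)
              comm' := fun i j _ => by
                haveI := mono (X.X j)
                rw [← cancel_mono (φ (X.X j)), Category.assoc, hg, Category.assoc, hg,
                  ← f.comm, ← Category.assoc, hg] }, ?_⟩
    apply HomologicalComplex.hom_ext
    intro n
    exact hg _ _ _ _
end

section
/- If every left R-module has an epic 𝒳-preenvelope, then every complex of left R-modules has an epic C(𝒳*)-preenvelope (a C(𝒳*)-preenvelope which is an epimorphism of complexes). -/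
open CategoryTheory Limits DirectSum

/-- if every module has an epic `𝒳`-preenvelope, then every complex has an epic
`C(𝒳*)`-preenvelope. -/
theorem stmt_2 {R : Type} [Ring R] (𝒳 : ModuleCat.{0} R → Prop)
    (h : ∀ M : ModuleCat.{0} R, ∃ (E : ModuleCat.{0} R) (φ : M ⟶ E),
      Epi φ ∧ IsPreenvelope 𝒳 φ)
    (X : ChainComplex (ModuleCat.{0} R) ℤ) :
    ∃ (E : ChainComplex (ModuleCat.{0} R) ℤ) (φ : X ⟶ E),
      Epi φ ∧ IsPreenvelope (XStar 𝒳) φ := by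

  classical
  choose E0 φ0 hepi henv using h
  have hd : ∀ i j : ℤ, ∃ g : E0 (X.X i) ⟶ E0 (X.X j),
      φ0 (X.X i) ≫ g = X.d i j ≫ φ0 (X.X j) :=
    fun i j => (henv (X.X i)).2 _ (henv (X.X j)).1 _
  choose dE hdE using hd
  have := fun n => hepi (X.X n)
  refine ⟨{
      X := fun n => E0 (X.X n)
      d := dE
      shape := ?_
      d_comp_d' := ?_ }, { f := fun n => φ0 (X.X n), comm' := fun i j _ => hdE i j },
      ?_, ?_, ?_⟩
  · intro i j hij
    have := hepi (X.X i)
    rw [← cancel_epi (φ0 (X.X i)), hdE, X.shape i j hij, zero_comp, comp_zero]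
  · intro i j k _ _
    have := hepi (X.X i)
    rw [← cancel_epi (φ0 (X.X i)), comp_zero, reassoc_of% (hdE i j), hdE j k,
      X.d_comp_d_assoc, zero_comp]
  · constructor
    intro Z u v huv
    apply HomologicalComplex.hom_ext
    intro n
    have := hepi (X.X n)
    have hcomp := congrArg (fun (w : X ⟶ Z) => w.f n) huv
    simp only [HomologicalComplex.comp_f] at hcomp
    exact (cancel_epi (φ0 (X.X n))).mp hcomp
  · exact fun n => (henv (X.X n)).1
  · intro E' hE' f
    have hg : ∀ n : ℤ, ∃ g : E0 (X.X n) ⟶ E'.X n, φ0 (X.X n) ≫ g = f.f n :=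
      fun n => (henv (X.X n)).2 _ (hE' n) _
    choose g hg using hg
    refine ⟨{ f := g, comm' := ?_ }, ?_⟩
    · intro i j _
      have := hepi (X.X i)
      rw [← cancel_epi (φ0 (X.X i)), reassoc_of% (hg i), reassoc_of% (hdE i j), hg j,
        f.comm]
    · exact HomologicalComplex.hom_ext _ _ fun n => hg n
end

section
/- If every left R-module has an epic 𝒳-envelope, then every complex of left R-modules has an epic C(𝒳*)-envelope (a C(𝒳*)-envelope which is an epimorphism of complexes). -/
open CategoryTheory Limits DirectSum

/-- if every module has an epic `𝒳`-envelope, then every complex has an epic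
`C(𝒳*)`-envelope. -/
theorem stmt_4 {R : Type} [Ring R] (𝒳 : ModuleCat.{0} R → Prop)
    (h : ∀ M : ModuleCat.{0} R, ∃ (E : ModuleCat.{0} R) (φ : M ⟶ E),
      Epi φ ∧ IsEnvelope 𝒳 φ)
    (X : ChainComplex (ModuleCat.{0} R) ℤ) :
    ∃ (E : ChainComplex (ModuleCat.{0} R) ℤ) (φ : X ⟶ E),
      Epi φ ∧ IsEnvelope (XStar 𝒳) φ := by
  choose E φE hEpi hEnv using h
  have hX : ∀ M, 𝒳 (E M) := fun M => (hEnv M).1.1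
  have fact : ∀ (M E' : ModuleCat.{0} R), 𝒳 E' → ∀ f : M ⟶ E', ∃ g : E M ⟶ E', φE M ≫ g = f :=
    fun M => (hEnv M).1.2
  choose dfun hdfun using fun (i j : ℤ) =>
    fact (X.X i) (E (X.X j)) (hX _) (X.d i j ≫ φE (X.X j))
  let EC : ChainComplex (ModuleCat.{0} R) ℤ :=
    { X := fun n => E (X.X n)
      d := dfun
      shape := by
        intro i j hij
        refine (cancel_epi (φE (X.X i))).1 ?_
        rw [hdfun i j, X.shape i j hij, zero_comp, comp_zero]
      d_comp_d' := by
        intro i j k _ _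
        refine (cancel_epi (φE (X.X i))).1 ?_
        rw [comp_zero, ← Category.assoc, hdfun i j, Category.assoc, hdfun j k,
          ← Category.assoc, X.d_comp_d, zero_comp] }
  let φC : X ⟶ EC := { f := fun n => φE (X.X n), comm' := fun i j _ => hdfun i j }
  have hXStar : XStar 𝒳 EC := fun n => hX (X.X n)
  refine ⟨EC, φC, ?_, ⟨hXStar, ?_⟩, ?_⟩
  · constructor
    intro Z u v huv
    refine HomologicalComplex.hom_ext _ _ fun n => ?_
    exact (cancel_epi (φE (X.X n))).1 (congr_arg (fun ψ => HomologicalComplex.Hom.f ψ n) huv)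
  · intro E' hE' f
    choose g hg using fun n => fact (X.X n) (E'.X n) (hE' n) (f.f n)
    refine ⟨{ f := g, comm' := ?_ }, ?_⟩
    · intro i j _
      refine (cancel_epi (φE (X.X i))).1 ?_
      show φE (X.X i) ≫ g i ≫ E'.d i j = φE (X.X i) ≫ dfun i j ≫ g j
      rw [← Category.assoc, ← Category.assoc, hg i, hdfun i j, f.comm i j, Category.assoc,
        hg j]
    · exact HomologicalComplex.hom_ext _ _ fun n => hg n
  · intro h' hh'
    have : ∀ n : ℤ, IsIso (h'.f n) := fun n =>
      (hEnv (X.X n)).2 (h'.f n)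
        (congr_arg (fun ψ => HomologicalComplex.Hom.f ψ n) hh')
    exact HomologicalComplex.Hom.isIso_of_components h'
end

section
/- Suppose the class 𝒳 of left R-modules is closed under finite direct sums. If every left R-module has an 𝒳-precover, then every bounded complex of left R-modules (a complex with only finitely many nonzero components) has a C(𝒳*)-precover. -/
open CategoryTheory Limits DirectSum

namespace Stmt5Aux

variable {R : Type} [Ring R]

/-- a zero module of the "finite direct sum" form -/
def ZeroM (R : Type) [Ring R] : ModuleCat.{0} R :=
  ModuleCat.of R (DirectSum (Fin 0) (fun i => ↥((fun _ : Fin 0 => ModuleCat.of R R) i)))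

instance : Subsingleton ↥(ZeroM R) :=
  ⟨fun a b => DFinsupp.ext (fun i => i.elim0)⟩

variable (𝒳 : ModuleCat.{0} R → Prop) (X : ChainComplex (ModuleCat.{0} R) ℤ) (u : ℤ)

structure Win (k : ℕ) where
  Pprev : ModuleCat.{0} R
  P : ModuleCat.{0} R
  Kprev : Submodule R Pprev
  fprev : Pprev ⟶ X.X (u + (k : ℤ))
  fcur : P ⟶ X.X (u + ((k + 1 : ℕ) : ℤ))
  dp : P ⟶ Pprev
  hPprev : 𝒳 Pprev
  hP : 𝒳 P
  hsq : dp ≫ fprev = fcur ≫ X.d (u + ((k + 1 : ℕ) : ℤ)) (u + (k : ℤ))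
  hrange : ∀ p, dp p ∈ Kprev
  hlift : ∀ (W : ModuleCat.{0} R), 𝒳 W →
    ∀ (a : W ⟶ X.X (u + ((k + 1 : ℕ) : ℤ))) (b : W ⟶ Pprev),
      a ≫ X.d (u + ((k + 1 : ℕ) : ℤ)) (u + (k : ℤ)) = b ≫ fprev → (∀ x, b x ∈ Kprev) →
      ∃ t : W ⟶ P, t ≫ fcur = a ∧ t ≫ dp = b

variable (hz : ∀ n : ℤ, n ≤ u + 1 → IsZero (X.X n)) (hZ : 𝒳 (ZeroM R))

def baseWin : Win 𝒳 X u 0 where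
  Pprev := ZeroM R
  P := ZeroM R
  Kprev := ⊤
  fprev := 0
  fcur := 0
  dp := 0
  hPprev := hZ
  hP := hZ
  hsq := by simp
  hrange := fun _ => trivial
  hlift := by
    intro W hW a b hab hbK
    refine ⟨0, ?_, ?_⟩
    · exact (hz _ (by omega)).eq_of_tgt _ _
    · apply ModuleCat.hom_ext; apply LinearMap.ext; intro x; exact Subsingleton.elim _ _

variable (hpre : ∀ M : ModuleCat.{0} R, ∃ (P : ModuleCat.{0} R) (φ : P ⟶ M), IsPrecover 𝒳 φ)

noncomputable def stepWin (k : ℕ) (w : Win 𝒳 X u k) : Win 𝒳 X u (k + 1) := by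
  classical
  let A : ModuleCat.{0} R := X.X (u + ((k + 1 + 1 : ℕ) : ℤ))
  let dX : A ⟶ X.X (u + ((k + 1 : ℕ) : ℤ)) := X.d _ _
  let Zsub : Submodule R (↥A × ↥w.P) :=
    { carrier := {q | dX q.1 = w.fcur q.2 ∧ w.dp q.2 = 0}
      add_mem' := by
        rintro q r ⟨h1, h2⟩ ⟨h3, h4⟩
        constructor
        · simp only [Prod.fst_add, Prod.snd_add, map_add, h1, h3]
        · simp only [Prod.snd_add, map_add, h2, h4, add_zero]
      zero_mem' := by constructor <;> simp
      smul_mem' := by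
        rintro c q ⟨h1, h2⟩
        constructor
        · simp only [Prod.smul_fst, Prod.smul_snd, map_smul, h1]
        · simp only [Prod.smul_snd, map_smul, h2, smul_zero] }
  let Zmod : ModuleCat.{0} R := ModuleCat.of R ↥Zsub
  choose Q π hπ using hpre Zmod
  refine
    { Pprev := w.P
      P := Q
      Kprev := LinearMap.ker w.dp.hom
      fprev := w.fcur
      fcur := π ≫ ModuleCat.ofHom ((LinearMap.fst R ↥A ↥w.P).comp Zsub.subtype)
      dp := π ≫ ModuleCat.ofHom ((LinearMap.snd R ↥A ↥w.P).comp Zsub.subtype)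
      hPprev := w.hP
      hP := hπ.1
      hsq := ?_
      hrange := ?_
      hlift := ?_ }
  · apply ModuleCat.hom_ext; apply LinearMap.ext; intro p
    exact ((π p).2.1).symm
  · intro p
    exact LinearMap.mem_ker.mpr (π p).2.2
  · intro W hW a b hab hbK
    have hmem : ∀ x : ↥W, (a x, b x) ∈ Zsub := by
      intro x
      constructor
      · exact (LinearMap.congr_fun (congrArg ModuleCat.Hom.hom hab) x : _)
      · exact LinearMap.mem_ker.mp (hbK x)
    let ℓ : ↥W →ₗ[R] ↥Zsub :=
      { toFun := fun x => ⟨(a x, b x), hmem x⟩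
        map_add' := fun x y => Subtype.ext (by simp [Prod.ext_iff])
        map_smul' := fun c x => Subtype.ext (by simp [Prod.ext_iff]) }
    obtain ⟨t, ht⟩ := hπ.2 W hW (show W ⟶ Zmod from ModuleCat.ofHom ℓ)
    have htx : ∀ x : ↥W, π (t x) = ℓ x := fun x => LinearMap.congr_fun (congrArg ModuleCat.Hom.hom ht) x
    refine ⟨t, ?_, ?_⟩
    · apply ModuleCat.hom_ext; apply LinearMap.ext; intro x
      show ((LinearMap.fst R ↥A ↥w.P).comp Zsub.subtype) (π (t x)) = a x
      rw [htx]; rfl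
    · apply ModuleCat.hom_ext; apply LinearMap.ext; intro x
      show ((LinearMap.snd R ↥A ↥w.P).comp Zsub.subtype) (π (t x)) = b x
      rw [htx]; rfl

noncomputable def Wrec : ∀ k : ℕ, Win 𝒳 X u k := fun k =>
  Nat.rec (baseWin 𝒳 X u hz hZ) (fun n ih => stepWin 𝒳 X u hpre n ih) k

lemma dp_dp (k : ℕ) :
    (Wrec 𝒳 X u hz hZ hpre (k + 1)).dp ≫ (Wrec 𝒳 X u hz hZ hpre k).dp = 0 := by
  apply ModuleCat.hom_ext; apply LinearMap.ext; intro p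
  exact LinearMap.mem_ker.mp ((Wrec 𝒳 X u hz hZ hpre (k + 1)).hrange p)


section Assembly

variable {𝒳} {X} {u}

local notation "W" => Wrec 𝒳 X u hz hZ hpre

lemma EA (m : ℤ) : ((W ((m + 1 - u).toNat)).Pprev : ModuleCat.{0} R)
    = (W ((m - u).toNat)).P := by
  rcases le_or_gt u m with hle | hlt
  · have h1 : (m + 1 - u).toNat = (m - u).toNat + 1 := by omega
    rw [h1]; rfl
  · have h1 : (m + 1 - u).toNat = 0 := by omega
    have h2 : (m - u).toNat = 0 := by omega
    rw [h1, h2]; rfl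

noncomputable def dd (m : ℤ) :
    ((W ((m + 1 - u).toNat)).Pprev : ModuleCat.{0} R) ⟶ (W ((m - u).toNat)).Pprev :=
  eqToHom (EA hz hZ hpre m) ≫ (W ((m - u).toNat)).dp

lemma helperA (k1 k0 : ℕ) (hk : k1 = k0 + 1 ∨ k1 = 0) {A : ModuleCat.{0} R}
    (e1 : A = (W k1).P) (e2 : ((W k1).Pprev : ModuleCat.{0} R) = (W k0).P) :
    (eqToHom e1 ≫ (W k1).dp) ≫ (eqToHom e2 ≫ (W k0).dp) = 0 := by
  subst e1
  rcases hk with hk | hk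
  · subst hk
    apply ModuleCat.hom_ext; apply LinearMap.ext; intro p
    exact LinearMap.mem_ker.mp ((W (k0 + 1)).hrange _)
  · subst hk
    have hb : (W 0).dp = 0 := rfl
    rw [hb]
    simp

lemma dd_dd (m : ℤ) : dd hz hZ hpre (m + 1) ≫ dd hz hZ hpre m = 0 :=
  helperA hz hZ hpre _ _ (by omega) (EA hz hZ hpre (m + 1)) (EA hz hZ hpre m)

noncomputable def Pcx : ChainComplex (ModuleCat.{0} R) ℤ where
  X := fun m => (W ((m - u).toNat)).Pprev
  d := fun i j =>
    if hij : j + 1 = i then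
      eqToHom (congrArg (fun z => ((W ((z - u).toNat)).Pprev : ModuleCat.{0} R)) hij.symm)
        ≫ dd hz hZ hpre j
    else 0
  shape := by
    intro i j hij
    rw [ComplexShape.down_Rel] at hij
    exact dif_neg hij
  d_comp_d' := by
    intro i j l hij hjl
    rw [ComplexShape.down_Rel] at hij hjl
    subst hij; subst hjl
    rw [dif_pos rfl, dif_pos rfl]
    simp only [eqToHom_refl, Category.id_comp]
    exact dd_dd hz hZ hpre l

lemma sqHelper (k1 k0 : ℕ) (hk : k1 = k0 + 1) {i j : ℤ}
    (hj : u + (k0 : ℤ) = j) (hi : u + ((k0 + 1 : ℕ) : ℤ) = i)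
    (c1 : X.X (u + (k1 : ℤ)) = X.X i)
    (c0 : X.X (u + (k0 : ℤ)) = X.X j)
    (e : ((W k1).Pprev : ModuleCat.{0} R) = (W k0).P) :
    ((W k1).fprev ≫ eqToHom c1) ≫ X.d i j
      = (eqToHom e ≫ (W k0).dp) ≫ ((W k0).fprev ≫ eqToHom c0) := by
  subst hk; subst hi; subst hj
  apply ModuleCat.hom_ext; apply LinearMap.ext; intro p
  exact (LinearMap.congr_fun (congrArg ModuleCat.Hom.hom (W k0).hsq) (eqToHom e p)).symm

lemma Pcx_d (j : ℤ) : (Pcx hz hZ hpre).d (j + 1) j = dd hz hZ hpre j := by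
  dsimp only [Pcx]
  rw [dif_pos rfl]
  simp

lemma d_congr {i i' j : ℤ} (h : i = i') (e : X.X i = X.X i') :
    eqToHom e ≫ X.d i' j = X.d i j := by subst h; simp

noncomputable def phicx : Pcx hz hZ hpre ⟶ X where
  f := fun m =>
    if hm : u ≤ m then
      (W ((m - u).toNat)).fprev ≫
        eqToHom (congrArg X.X (show u + (((m - u).toNat : ℕ) : ℤ) = m by omega))
    else 0
  comm' := by
    intro i j hij
    rw [ComplexShape.down_Rel] at hij
    subst hij
    rcases le_or_gt u j with hle | hlt
    · obtain ⟨k, rfl⟩ : ∃ k : ℕ, j = u + (k : ℤ) := ⟨(j - u).toNat, by omega⟩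
      rw [dif_pos (show u ≤ u + (k:ℤ) + 1 by omega), dif_pos (show u ≤ u + (k:ℤ) by omega),
        Pcx_d]
      simp only [dd]
      exact sqHelper hz hZ hpre _ _ (by omega) (by omega) (by push_cast; omega) _ _ _
    · exact (hz j (by omega)).eq_of_tgt _ _

lemma PcxX_isZero (j : ℤ) (hj : j ≤ u) : IsZero ((Pcx hz hZ hpre).X j) := by
  have h0 : (j - u).toNat = 0 := by omega
  show IsZero ((W ((j - u).toNat)).Pprev)
  rw [h0]
  exact @ModuleCat.isZero_of_subsingleton _ _ _ (inferInstanceAs (Subsingleton ↥(ZeroM R)))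

section Lift

variable (C' : ChainComplex (ModuleCat.{0} R) ℤ) (f : C' ⟶ X)

structure Lst (k : ℕ) where
  L : C'.X (u + ((k + 1 : ℕ) : ℤ)) ⟶ (W k).P
  Lp : C'.X (u + (k : ℤ)) ⟶ (W k).Pprev
  hchain : L ≫ (W k).dp = C'.d (u + ((k + 1 : ℕ) : ℤ)) (u + (k : ℤ)) ≫ Lp
  hfacL : L ≫ (W k).fcur = f.f (u + ((k + 1 : ℕ) : ℤ))
  hfacLp : Lp ≫ (W k).fprev = f.f (u + (k : ℤ))

noncomputable def baseLst : Lst hz hZ hpre C' f 0 where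
  L := 0
  Lp := 0
  hchain := by simp
  hfacL := ((hz _ (by push_cast; omega)).eq_of_tgt _ _)
  hfacLp := ((hz _ (by push_cast; omega)).eq_of_tgt _ _)

variable (hC' : ∀ n : ℤ, 𝒳 (C'.X n))

noncomputable def stepLst (k : ℕ) (st : Lst hz hZ hpre C' f k) :
    Lst hz hZ hpre C' f (k + 1) := by
  have hcond1 : f.f (u + ((k + 1 + 1 : ℕ) : ℤ)) ≫
        X.d (u + ((k + 1 + 1 : ℕ) : ℤ)) (u + ((k + 1 : ℕ) : ℤ))
      = (C'.d (u + ((k + 1 + 1 : ℕ) : ℤ)) (u + ((k + 1 : ℕ) : ℤ)) ≫ st.L) ≫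
        (W (k + 1)).fprev := by
    refine Eq.trans ?_ (Category.assoc _ _ _).symm
    have h2 : st.L ≫ (W (k + 1)).fprev = f.f (u + ((k + 1 : ℕ) : ℤ)) := st.hfacL
    erw [h2]
    exact f.comm _ _
  have hcond2 : ∀ x, (C'.d (u + ((k + 1 + 1 : ℕ) : ℤ)) (u + ((k + 1 : ℕ) : ℤ)) ≫ st.L) x
      ∈ (W (k + 1)).Kprev := by
    intro x
    show (W k).dp _ = 0
    have h1 : (W k).dp (st.L (C'.d (u + ((k + 1 + 1 : ℕ) : ℤ)) (u + ((k + 1 : ℕ) : ℤ)) x))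
        = st.Lp (C'.d (u + ((k + 1 : ℕ) : ℤ)) (u + (k : ℤ))
            (C'.d (u + ((k + 1 + 1 : ℕ) : ℤ)) (u + ((k + 1 : ℕ) : ℤ)) x)) :=
      LinearMap.congr_fun (congrArg ModuleCat.Hom.hom st.hchain) _
    have h2 : C'.d (u + ((k + 1 : ℕ) : ℤ)) (u + (k : ℤ))
        (C'.d (u + ((k + 1 + 1 : ℕ) : ℤ)) (u + ((k + 1 : ℕ) : ℤ)) x) = 0 :=
      LinearMap.congr_fun (congrArg ModuleCat.Hom.hom
        (C'.d_comp_d (u + ((k + 1 + 1 : ℕ) : ℤ)) (u + ((k + 1 : ℕ) : ℤ)) (u + (k : ℤ)))) x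
    show (W k).dp (st.L _) = 0
    exact h1.trans (by rw [h2, map_zero])
  have hl := (W (k + 1)).hlift _ (hC' _) _ _ hcond1 hcond2
  exact { L := hl.choose, Lp := st.L, hchain := hl.choose_spec.2,
          hfacL := hl.choose_spec.1, hfacLp := st.hfacL }

noncomputable def SLrec : ∀ k : ℕ, Lst hz hZ hpre C' f k := fun k =>
  Nat.rec (baseLst hz hZ hpre C' f) (fun n ih => stepLst hz hZ hpre C' f hC' n ih) k

local notation "SL" => SLrec hz hZ hpre C' f hC'

lemma sqHelper2 (k1 k0 : ℕ) (hk : k1 = k0 + 1) {i j : ℤ}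
    (hj : u + (k0 : ℤ) = j) (hi : u + ((k0 + 1 : ℕ) : ℤ) = i)
    (c1 : C'.X i = C'.X (u + (k1 : ℤ))) (c0 : C'.X j = C'.X (u + (k0 : ℤ)))
    (e : ((W k1).Pprev : ModuleCat.{0} R) = (W k0).P) :
    (eqToHom c1 ≫ (SL k1).Lp) ≫ (eqToHom e ≫ (W k0).dp)
      = C'.d i j ≫ (eqToHom c0 ≫ (SL k0).Lp) := by
  subst hk; subst hi; subst hj
  apply ModuleCat.hom_ext; apply LinearMap.ext; intro x
  exact LinearMap.congr_fun (congrArg ModuleCat.Hom.hom (SL k0).hchain) (eqToHom c1 x)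

lemma facHelper (k0 : ℕ) {m : ℤ} (hm : u + (k0 : ℤ) = m)
    (c1 : C'.X m = C'.X (u + (k0 : ℤ))) (c0 : X.X (u + (k0 : ℤ)) = X.X m) :
    (eqToHom c1 ≫ (SL k0).Lp) ≫ ((W k0).fprev ≫ eqToHom c0) = f.f m := by
  subst hm
  apply ModuleCat.hom_ext; apply LinearMap.ext; intro x
  exact LinearMap.congr_fun (congrArg ModuleCat.Hom.hom (SL k0).hfacLp) (eqToHom c1 x)

noncomputable def gLift : C' ⟶ Pcx hz hZ hpre where
  f := fun m =>
    if hm : u ≤ m then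
      eqToHom (congrArg C'.X (show m = u + (((m - u).toNat : ℕ) : ℤ) by omega)) ≫
        (SL ((m - u).toNat)).Lp
    else 0
  comm' := by
    intro i j hij
    rw [ComplexShape.down_Rel] at hij
    subst hij
    rcases le_or_gt u j with hle | hlt
    · obtain ⟨k, rfl⟩ : ∃ k : ℕ, j = u + (k : ℤ) := ⟨(j - u).toNat, by omega⟩
      rw [dif_pos (show u ≤ u + (k : ℤ) + 1 by omega), dif_pos (show u ≤ u + (k : ℤ) by omega),
        Pcx_d]
      simp only [dd]
      exact sqHelper2 hz hZ hpre C' f hC' _ _ (by omega) (by omega) (by push_cast; omega) _ _ _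
    · exact (PcxX_isZero hz hZ hpre j (by omega)).eq_of_tgt _ _

lemma gLift_fac : gLift hz hZ hpre C' f hC' ≫ phicx hz hZ hpre = f := by
  ext m : 1
  rw [HomologicalComplex.comp_f]
  rcases le_or_gt u m with hle | hlt
  · dsimp only [gLift, phicx]
    rw [dif_pos hle, dif_pos hle]
    exact facHelper hz hZ hpre C' f hC' ((m - u).toNat) (by omega) _ _
  · dsimp only [gLift, phicx]
    rw [dif_neg (by omega : ¬ u ≤ m), zero_comp]
    exact (hz m (by omega)).eq_of_tgt _ _

end Lift

include hz hZ hpre in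
theorem exists_precover :
    ∃ (P : ChainComplex (ModuleCat.{0} R) ℤ) (φ : P ⟶ X), IsPrecover (XStar 𝒳) φ := by
  refine ⟨Pcx hz hZ hpre, phicx hz hZ hpre, ?_, ?_⟩
  · intro n
    exact (W ((n - u).toNat)).hPprev
  · intro C' hC' f
    exact ⟨gLift hz hZ hpre C' f hC', gLift_fac hz hZ hpre C' f hC'⟩

end Assembly
end Stmt5Aux

/-- if `𝒳` is closed under finite direct sums and every module has an
`𝒳`-precover, then every bounded complex has a `C(𝒳*)`-precover. -/
theorem stmt_5 {R : Type} [Ring R] (𝒳 : ModuleCat.{0} R → Prop)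
    (hsum : ∀ (ι : Type) [Fintype ι] (f : ι → ModuleCat.{0} R),
      (∀ i, 𝒳 (f i)) → 𝒳 (ModuleCat.of R (⨁ i, ↥(f i))))
    (h : ∀ M : ModuleCat.{0} R, ∃ (P : ModuleCat.{0} R) (φ : P ⟶ M), IsPrecover 𝒳 φ)
    (X : ChainComplex (ModuleCat.{0} R) ℤ)
    (hbdd : {n : ℤ | ¬ IsZero (X.X n)}.Finite) :
    ∃ (P : ChainComplex (ModuleCat.{0} R) ℤ) (φ : P ⟶ X), IsPrecover (XStar 𝒳) φ := by
  obtain ⟨s, hs⟩ := hbdd.bddBelow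
  have hz : ∀ n : ℤ, n ≤ (s - 2) + 1 → IsZero (X.X n) := by
    intro n hn
    by_contra hcon
    have := hs hcon
    omega
  have hZ : 𝒳 (Stmt5Aux.ZeroM R) := hsum (Fin 0) (fun _ => ModuleCat.of R R) (fun i => i.elim0)
  exact Stmt5Aux.exists_precover hz hZ h
end

section
/- Suppose the class 𝒳 of left R-modules is closed under finite direct sums. If every left R-module has an 𝒳-preenvelope, then every bounded complex of left R-modules (a complex with only finitely many nonzero components) has a C(𝒳*)-preenvelope. -/
open CategoryTheory Limits DirectSum

section Aux

variable {R : Type} [Ring R] (𝒳 : ModuleCat.{0} R → Prop)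

noncomputable def envOf (henv : ∀ M : ModuleCat.{0} R, ∃ (E : ModuleCat.{0} R) (φ : M ⟶ E),
    IsPreenvelope 𝒳 φ) (M : ModuleCat.{0} R) : ModuleCat.{0} R := (henv M).choose

noncomputable def envMap (henv : ∀ M : ModuleCat.{0} R, ∃ (E : ModuleCat.{0} R) (φ : M ⟶ E),
    IsPreenvelope 𝒳 φ) (M : ModuleCat.{0} R) : M ⟶ envOf 𝒳 henv M :=
  (henv M).choose_spec.choose

lemma env_spec (henv : ∀ M : ModuleCat.{0} R, ∃ (E : ModuleCat.{0} R) (φ : M ⟶ E),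
    IsPreenvelope 𝒳 φ) (M : ModuleCat.{0} R) : IsPreenvelope 𝒳 (envMap 𝒳 henv M) :=
  (henv M).choose_spec.choose_spec

structure MyNode (Xn : ModuleCat.{0} R) : Type 1 where
  A : ModuleCat.{0} R
  Q : ModuleCat.{0} R
  μ : Xn ⟶ A
  q : A ⟶ Q
  hA : 𝒳 A
  hq : Epi q

variable (henv : ∀ M : ModuleCat.{0} R, ∃ (E : ModuleCat.{0} R) (φ : M ⟶ E), IsPreenvelope 𝒳 φ)
variable (X : ChainComplex (ModuleCat.{0} R) ℤ)
variable (Z : ModuleCat.{0} R) (hZ : 𝒳 Z) (N : ℤ)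

noncomputable def baseNode (n : ℤ) : MyNode 𝒳 (X.X n) :=
  { A := Z, Q := Z, μ := 0, q := 𝟙 Z, hA := hZ, hq := inferInstance }

noncomputable def stepNode (n : ℤ) (t : MyNode 𝒳 (X.X (n+1))) : MyNode 𝒳 (X.X n) :=
  { A := envOf 𝒳 henv (pushout (X.d (n+1) n) (t.μ ≫ t.q))
    Q := cokernel (pushout.inr (X.d (n+1) n) (t.μ ≫ t.q) ≫
      envMap 𝒳 henv (pushout (X.d (n+1) n) (t.μ ≫ t.q)))
    μ := pushout.inl (X.d (n+1) n) (t.μ ≫ t.q) ≫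
      envMap 𝒳 henv (pushout (X.d (n+1) n) (t.μ ≫ t.q))
    q := cokernel.π _
    hA := (env_spec 𝒳 henv _).1
    hq := inferInstance }

noncomputable def stepδ (n : ℤ) (t : MyNode 𝒳 (X.X (n+1))) :
    t.A ⟶ (stepNode 𝒳 henv X n t).A :=
  t.q ≫ pushout.inr (X.d (n+1) n) (t.μ ≫ t.q) ≫
    envMap 𝒳 henv (pushout (X.d (n+1) n) (t.μ ≫ t.q))

noncomputable def tel (n : ℤ) : MyNode 𝒳 (X.X n) :=
  if _ : N ≤ n then baseNode 𝒳 X Z hZ n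
  else stepNode 𝒳 henv X n (tel (n+1))
termination_by (N - n).toNat
decreasing_by omega

lemma tel_base {n : ℤ} (hn : N ≤ n) :
    tel 𝒳 henv X Z hZ N n = baseNode 𝒳 X Z hZ n := by
  rw [tel]; exact dif_pos hn

lemma tel_eq {n : ℤ} (hn : ¬ N ≤ n) :
    tel 𝒳 henv X Z hZ N n = stepNode 𝒳 henv X n (tel 𝒳 henv X Z hZ N (n+1)) := by
  rw [tel]; exact dif_neg hn

noncomputable def Edelta (n : ℤ) :
    (tel 𝒳 henv X Z hZ N (n+1)).A ⟶ (tel 𝒳 henv X Z hZ N n).A :=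
  if hn : N ≤ n then 0
  else stepδ 𝒳 henv X n (tel 𝒳 henv X Z hZ N (n+1)) ≫
    eqToHom (congrArg MyNode.A (tel_eq 𝒳 henv X Z hZ N hn)).symm

lemma Edelta_base {n : ℤ} (hn : N ≤ n) : Edelta 𝒳 henv X Z hZ N n = 0 := dif_pos hn

lemma Edelta_step {n : ℤ} (hn : ¬ N ≤ n) :
    Edelta 𝒳 henv X Z hZ N n = stepδ 𝒳 henv X n (tel 𝒳 henv X Z hZ N (n+1)) ≫
      eqToHom (congrArg MyNode.A (tel_eq 𝒳 henv X Z hZ N hn)).symm := dif_neg hn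

lemma comm_gen (n : ℤ) (t : MyNode 𝒳 (X.X (n+1))) (s : MyNode 𝒳 (X.X n))
    (hs : s = stepNode 𝒳 henv X n t) :
    t.μ ≫ (stepδ 𝒳 henv X n t ≫ eqToHom (congrArg MyNode.A hs).symm) = X.d (n+1) n ≫ s.μ := by
  subst hs
  simp only [eqToHom_refl, Category.comp_id]
  simp only [stepδ, stepNode]
  rw [← Category.assoc, ← Category.assoc, ← pushout.condition]
  simp

lemma dd_gen (n : ℤ) (t'' : MyNode 𝒳 (X.X (n+1+1))) (t : MyNode 𝒳 (X.X (n+1)))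
    (s : MyNode 𝒳 (X.X n))
    (ht : t = stepNode 𝒳 henv X (n+1) t'') (hs : s = stepNode 𝒳 henv X n t) :
    (stepδ 𝒳 henv X (n+1) t'' ≫ eqToHom (congrArg MyNode.A ht).symm) ≫
      (stepδ 𝒳 henv X n t ≫ eqToHom (congrArg MyNode.A hs).symm) = 0 := by
  subst hs; subst ht
  simp only [eqToHom_refl, Category.comp_id]
  simp only [stepδ, stepNode, Category.assoc]
  slice_lhs 2 4 => rw [← Category.assoc, cokernel.condition]
  simp
  rfl

lemma lift_gen (C : ChainComplex (ModuleCat.{0} R) ℤ) (hC : ∀ m : ℤ, 𝒳 (C.X m))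
    (f : X ⟶ C) (n : ℤ) (t : MyNode 𝒳 (X.X (n+1))) (s : MyNode 𝒳 (X.X n))
    (hs : s = stepNode 𝒳 henv X n t)
    (g₁ : t.A ⟶ C.X (n+1)) (h₁ : t.μ ≫ g₁ = f.f (n+1))
    (w : t.Q ⟶ C.X n) (hw : t.q ≫ w = g₁ ≫ C.d (n+1) n) :
    ∃ g : s.A ⟶ C.X n, s.μ ≫ g = f.f n ∧
      g₁ ≫ C.d (n+1) n = (stepδ 𝒳 henv X n t ≫ eqToHom (congrArg MyNode.A hs).symm) ≫ g := by
  subst hs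
  have hcomm : X.d (n+1) n ≫ f.f n = (t.μ ≫ t.q) ≫ w := by
    rw [Category.assoc, hw, ← Category.assoc, h₁, f.comm]
  obtain ⟨g, hg⟩ := (env_spec 𝒳 henv (pushout (X.d (n+1) n) (t.μ ≫ t.q))).2 (C.X n) (hC n)
    (pushout.desc (f.f n) w hcomm)
  refine ⟨g, ?_, ?_⟩
  · show (pushout.inl _ _ ≫ envMap 𝒳 henv _) ≫ g = f.f n
    rw [Category.assoc, hg, pushout.inl_desc]
  · simp only [eqToHom_refl, Category.comp_id]
    erw [stepδ, Category.assoc, Category.assoc, hg, pushout.inr_desc]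
    exact hw.symm

lemma get_w_base (C : ChainComplex (ModuleCat.{0} R) ℤ) (n : ℤ)
    (t : MyNode 𝒳 (X.X (n+1))) (ht : t = baseNode 𝒳 X Z hZ (n+1))
    (g₁ : t.A ⟶ C.X (n+1)) :
    ∃ w : t.Q ⟶ C.X n, t.q ≫ w = g₁ ≫ C.d (n+1) n := by
  subst ht
  exact ⟨g₁ ≫ C.d (n+1) n, Category.id_comp _⟩

lemma get_w_step (C : ChainComplex (ModuleCat.{0} R) ℤ) (n : ℤ)
    (t'' : MyNode 𝒳 (X.X (n+1+1))) (t : MyNode 𝒳 (X.X (n+1)))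
    (ht : t = stepNode 𝒳 henv X (n+1) t'')
    (g₁ : t.A ⟶ C.X (n+1)) (g₂ : t''.A ⟶ C.X (n+1+1))
    (hch : g₂ ≫ C.d (n+1+1) (n+1) =
      (stepδ 𝒳 henv X (n+1) t'' ≫ eqToHom (congrArg MyNode.A ht).symm) ≫ g₁) :
    ∃ w : t.Q ⟶ C.X n, t.q ≫ w = g₁ ≫ C.d (n+1) n := by
  subst ht
  simp only [eqToHom_refl, Category.comp_id] at hch
  have hz : (pushout.inr (X.d (n+1+1) (n+1)) (t''.μ ≫ t''.q) ≫
      envMap 𝒳 henv (pushout (X.d (n+1+1) (n+1)) (t''.μ ≫ t''.q))) ≫ (g₁ ≫ C.d (n+1) n) = 0 := by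
    have hepi : Epi t''.q := t''.hq
    rw [← cancel_epi t''.q]
    rw [comp_zero]
    have h2 : t''.q ≫ (pushout.inr (X.d (n+1+1) (n+1)) (t''.μ ≫ t''.q) ≫
        envMap 𝒳 henv (pushout (X.d (n+1+1) (n+1)) (t''.μ ≫ t''.q))) ≫ g₁ ≫ C.d (n+1) n =
        (g₂ ≫ C.d (n+1+1) (n+1)) ≫ C.d (n+1) n := by
      rw [hch, stepδ]; simp only [Category.assoc]; rfl
    rw [h2, Category.assoc, C.d_comp_d, comp_zero]
  exact ⟨cokernel.desc _ (g₁ ≫ C.d (n+1) n) hz, cokernel.π_desc _ _ _⟩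

variable (hN : ∀ n : ℤ, N ≤ n → IsZero (X.X n))

lemma get_w (C : ChainComplex (ModuleCat.{0} R) ℤ)
    (f : X ⟶ C) (n : ℤ)
    (g₁ : (tel 𝒳 henv X Z hZ N (n+1)).A ⟶ C.X (n+1))
    (g₂ : (tel 𝒳 henv X Z hZ N (n+1+1)).A ⟶ C.X (n+1+1))
    (hch : g₂ ≫ C.d (n+1+1) (n+1) = Edelta 𝒳 henv X Z hZ N (n+1) ≫ g₁) :
    ∃ w : (tel 𝒳 henv X Z hZ N (n+1)).Q ⟶ C.X n,
      (tel 𝒳 henv X Z hZ N (n+1)).q ≫ w = g₁ ≫ C.d (n+1) n := by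
  by_cases hb : N ≤ n+1
  · exact get_w_base 𝒳 X Z hZ C n _ (tel_base 𝒳 henv X Z hZ N hb) g₁
  · refine get_w_step 𝒳 henv X C n _ _ (tel_eq 𝒳 henv X Z hZ N hb) g₁ g₂ ?_
    rw [Edelta_step 𝒳 henv X Z hZ N hb] at hch
    exact hch

noncomputable def GG (C : ChainComplex (ModuleCat.{0} R) ℤ) (hC : ∀ m : ℤ, 𝒳 (C.X m))
    (f : X ⟶ C) (n : ℤ) :
    Σ' (g : (tel 𝒳 henv X Z hZ N n).A ⟶ C.X n)
      (g' : (tel 𝒳 henv X Z hZ N (n+1)).A ⟶ C.X (n+1)),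
      ((tel 𝒳 henv X Z hZ N n).μ ≫ g = f.f n) ∧
      ((tel 𝒳 henv X Z hZ N (n+1)).μ ≫ g' = f.f (n+1)) ∧
      (g' ≫ C.d (n+1) n = Edelta 𝒳 henv X Z hZ N n ≫ g) :=
  if hn : N ≤ n then
    ⟨0, 0, by rw [comp_zero]; exact ((hN n hn).eq_of_src _ _).symm,
      by rw [comp_zero]; exact ((hN (n+1) (by omega)).eq_of_src _ _).symm,
      by simp⟩
  else
    let prev := GG C hC f (n+1)
    let hw := get_w 𝒳 henv X Z hZ N C f n prev.1 prev.2.1 prev.2.2.2.2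
    let hg := lift_gen 𝒳 henv X C hC f n _ _ (tel_eq 𝒳 henv X Z hZ N hn) prev.1 prev.2.2.1
      hw.choose hw.choose_spec
    ⟨hg.choose, prev.1, hg.choose_spec.1, prev.2.2.1, by
      rw [Edelta_step 𝒳 henv X Z hZ N hn]; exact hg.choose_spec.2⟩
termination_by (N - n).toNat
decreasing_by omega

lemma GG_base (C : ChainComplex (ModuleCat.{0} R) ℤ) (hC : ∀ m : ℤ, 𝒳 (C.X m))
    (f : X ⟶ C) {n : ℤ} (hn : N ≤ n) : (GG 𝒳 henv X Z hZ N hN C hC f n).1 = 0 := by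
  rw [GG, dif_pos hn]

lemma GG_coh (C : ChainComplex (ModuleCat.{0} R) ℤ) (hC : ∀ m : ℤ, 𝒳 (C.X m))
    (f : X ⟶ C) (n : ℤ) :
    (GG 𝒳 henv X Z hZ N hN C hC f n).2.1 = (GG 𝒳 henv X Z hZ N hN C hC f (n+1)).1 := by
  by_cases hn : N ≤ n
  · rw [GG, dif_pos hn, GG_base 𝒳 henv X Z hZ N hN C hC f (show N ≤ n+1 by omega)]
  · rw [GG, dif_neg hn]

lemma Edelta_dd (n : ℤ) :
    Edelta 𝒳 henv X Z hZ N (n+1) ≫ Edelta 𝒳 henv X Z hZ N n = 0 := by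
  by_cases hn : N ≤ n
  · rw [Edelta_base 𝒳 henv X Z hZ N hn, comp_zero]
  · by_cases hn1 : N ≤ n+1
    · rw [Edelta_base 𝒳 henv X Z hZ N hn1, zero_comp]
    · rw [Edelta_step 𝒳 henv X Z hZ N hn, Edelta_step 𝒳 henv X Z hZ N hn1]
      exact dd_gen 𝒳 henv X n _ _ _ (tel_eq 𝒳 henv X Z hZ N hn1) (tel_eq 𝒳 henv X Z hZ N hn)

lemma Edelta_comm (hN : ∀ n : ℤ, N ≤ n → IsZero (X.X n)) (n : ℤ) :
    (tel 𝒳 henv X Z hZ N (n+1)).μ ≫ Edelta 𝒳 henv X Z hZ N n =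
      X.d (n+1) n ≫ (tel 𝒳 henv X Z hZ N n).μ := by
  by_cases hn : N ≤ n
  · rw [Edelta_base 𝒳 henv X Z hZ N hn, comp_zero,
      (hN (n+1) (by omega)).eq_of_src (X.d (n+1) n) 0, zero_comp]
  · rw [Edelta_step 𝒳 henv X Z hZ N hn]
    exact comm_gen 𝒳 henv X n _ _ (tel_eq 𝒳 henv X Z hZ N hn)

end Aux

/-- if `𝒳` is closed under finite direct sums and every module has an
`𝒳`-preenvelope, then every bounded complex has a `C(𝒳*)`-preenvelope. -/
theorem stmt_6 {R : Type} [Ring R] (𝒳 : ModuleCat.{0} R → Prop)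
    (hsum : ∀ (ι : Type) [Fintype ι] (f : ι → ModuleCat.{0} R),
      (∀ i, 𝒳 (f i)) → 𝒳 (ModuleCat.of R (⨁ i, ↥(f i))))
    (h : ∀ M : ModuleCat.{0} R, ∃ (E : ModuleCat.{0} R) (φ : M ⟶ E), IsPreenvelope 𝒳 φ)
    (X : ChainComplex (ModuleCat.{0} R) ℤ)
    (hbdd : {n : ℤ | ¬ IsZero (X.X n)}.Finite) :
    ∃ (E : ChainComplex (ModuleCat.{0} R) ℤ) (φ : X ⟶ E), IsPreenvelope (XStar 𝒳) φ := by
  classical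
  obtain ⟨B, hB⟩ := hbdd.bddAbove
  set Z : ModuleCat.{0} R :=
    ModuleCat.of R (⨁ i : Fin 0, ↥((Fin.elim0 : Fin 0 → ModuleCat.{0} R) i)) with hZdef
  have hZ : 𝒳 Z := hsum (Fin 0) Fin.elim0 (fun i => i.elim0)
  set N : ℤ := B + 1 with hNdef
  have hN : ∀ n : ℤ, N ≤ n → IsZero (X.X n) := by
    intro n hn
    by_contra hz
    have := hB (show n ∈ {n : ℤ | ¬ IsZero (X.X n)} from hz)
    omega
  refine ⟨ChainComplex.of (fun n => (tel 𝒳 h X Z hZ N n).A)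
      (fun n => Edelta 𝒳 h X Z hZ N n) (fun n => Edelta_dd 𝒳 h X Z hZ N n),
    { f := fun n => (tel 𝒳 h X Z hZ N n).μ
      comm' := by
        intro i j hij
        obtain rfl : j + 1 = i := hij
        show (tel 𝒳 h X Z hZ N (j+1)).μ ≫ ChainComplex.of.d (fun n => (tel 𝒳 h X Z hZ N n).A)
          (fun n => Edelta 𝒳 h X Z hZ N n) (j+1) j = _
        rw [ChainComplex.of_d]
        exact Edelta_comm 𝒳 h X Z hZ N hN j }, ?_, ?_⟩
  · intro n
    exact (tel 𝒳 h X Z hZ N n).hA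
  · intro C' hC' fmap
    refine ⟨{ f := fun n => (GG 𝒳 h X Z hZ N hN C' hC' fmap n).1
              comm' := by
                intro i j hij
                obtain rfl : j + 1 = i := hij
                show _ = ChainComplex.of.d _ _ (j+1) j ≫ _
                rw [ChainComplex.of_d]
                have hc := (GG 𝒳 h X Z hZ N hN C' hC' fmap j).2.2.2.2
                rw [GG_coh 𝒳 h X Z hZ N hN C' hC' fmap j] at hc
                exact hc }, ?_⟩
    refine HomologicalComplex.hom_ext _ _ fun n => ?_
    exact (GG 𝒳 h X Z hZ N hN C' hC' fmap n).2.2.1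
end

section
/- Suppose the class 𝒳 of left R-modules is closed under arbitrary direct sums. If every left R-module has an 𝒳-precover, then every complex of left R-modules of the form ⋯ → X_2 → X_1 → X_0 → 0 (i.e., every chain complex whose components vanish in all negative degrees) has a C(𝒳*)-precover. -/
open CategoryTheory Limits DirectSum

section Aux
variable {R : Type} [Ring R]

noncomputable def myf0 (R : Type) [Ring R] : Empty → ModuleCat.{0} R := fun i => i.elim
noncomputable def Z0 (R : Type) [Ring R] : ModuleCat.{0} R :=
  ModuleCat.of R (⨁ i, ↥(myf0 R i))

lemma Z0_isZero : IsZero (Z0 R) := by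
  have h : Subsingleton (⨁ i, ↥(myf0 R i)) := inferInstance
  exact @ModuleCat.isZero_of_subsingleton R _ (Z0 R) h

variable (𝒳 : ModuleCat.{0} R → Prop)
  (h : ∀ M : ModuleCat.{0} R, ∃ (P : ModuleCat.{0} R) (φ : P ⟶ M), IsPrecover 𝒳 φ)

noncomputable def pcP (M : ModuleCat.{0} R) : ModuleCat.{0} R := (h M).choose
noncomputable def pcphi (M : ModuleCat.{0} R) : pcP 𝒳 h M ⟶ M := (h M).choose_spec.choose
lemma pc_spec (M : ModuleCat.{0} R) : IsPrecover 𝒳 (pcphi 𝒳 h M) :=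
  (h M).choose_spec.choose_spec

variable (X : ChainComplex (ModuleCat.{0} R) ℤ)

/-- the defining linear map whose kernel is `Y_{n+1}` -/
noncomputable def qmap (n : ℕ) (Pp P : ModuleCat.{0} R) (Φ : P ⟶ X.X (n:ℤ)) (D : P ⟶ Pp) :
    (↥(X.X ((n:ℤ)+1)) × ↥P) →ₗ[R] (↥(X.X (n:ℤ)) × ↥Pp) :=
  LinearMap.prod
    ((X.d ((n:ℤ)+1) (n:ℤ)).hom.comp (LinearMap.fst R _ _)
      - (Φ.hom).comp (LinearMap.snd R _ _))
    ((D.hom).comp (LinearMap.snd R _ _))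

noncomputable def S : ∀ n : ℕ, Σ' (Pp P : ModuleCat.{0} R), (P ⟶ X.X (n:ℤ)) ×' (P ⟶ Pp)
  | 0 => ⟨Z0 R, pcP 𝒳 h (X.X (0:ℤ)), ⟨pcphi 𝒳 h (X.X (0:ℤ)), 0⟩⟩
  | (n+1) =>
    let s := S n
    let Y : ModuleCat.{0} R :=
      ModuleCat.of R ↥(LinearMap.ker (qmap X n s.1 s.2.1 s.2.2.1 s.2.2.2))
    let pi1 : Y ⟶ X.X ((n:ℤ)+1) :=
      ModuleCat.ofHom ((LinearMap.fst R _ _).comp (LinearMap.ker (qmap X n s.1 s.2.1 s.2.2.1 s.2.2.2)).subtype)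
    let pi2 : Y ⟶ s.2.1 :=
      ModuleCat.ofHom ((LinearMap.snd R _ _).comp (LinearMap.ker (qmap X n s.1 s.2.1 s.2.2.1 s.2.2.2)).subtype)
    ⟨s.2.1, pcP 𝒳 h Y, ⟨pcphi 𝒳 h Y ≫ pi1, pcphi 𝒳 h Y ≫ pi2⟩⟩

end Aux
section Aux2
variable {R : Type} [Ring R] (𝒳 : ModuleCat.{0} R → Prop)
  (h : ∀ M : ModuleCat.{0} R, ∃ (P : ModuleCat.{0} R) (φ : P ⟶ M), IsPrecover 𝒳 φ)
  (X : ChainComplex (ModuleCat.{0} R) ℤ)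

lemma S_X : ∀ n : ℕ, 𝒳 (S 𝒳 h X n).2.1
  | 0 => (pc_spec 𝒳 h _).1
  | (n+1) => (pc_spec 𝒳 h _).1

lemma S_comm (n : ℕ) :
    (S 𝒳 h X (n+1)).2.2.1 ≫ X.d ((n:ℤ)+1) (n:ℤ) = (S 𝒳 h X (n+1)).2.2.2 ≫ (S 𝒳 h X n).2.2.1 := by
  show (pcphi 𝒳 h _ ≫ _) ≫ _ = (pcphi 𝒳 h _ ≫ _) ≫ _
  apply ModuleCat.hom_ext
  apply LinearMap.ext
  rintro z
  have hz := ((pcphi 𝒳 h _) z).2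
  rw [LinearMap.mem_ker] at hz
  have h1 := congrArg Prod.fst hz
  simp only [qmap, LinearMap.prod_apply, Function.prod, LinearMap.sub_apply, LinearMap.comp_apply,
    LinearMap.fst_apply, LinearMap.snd_apply, Prod.fst_zero] at h1
  exact sub_eq_zero.mp h1

lemma S_DD (n : ℕ) :
    (S 𝒳 h X (n+1)).2.2.2 ≫ (S 𝒳 h X n).2.2.2 = 0 := by
  show (pcphi 𝒳 h _ ≫ _) ≫ _ = 0
  apply ModuleCat.hom_ext
  apply LinearMap.ext
  rintro z
  have hz := ((pcphi 𝒳 h _) z).2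
  rw [LinearMap.mem_ker] at hz
  have h2 := congrArg Prod.snd hz
  simp only [qmap, LinearMap.prod_apply, Function.prod, LinearMap.comp_apply,
    LinearMap.snd_apply, Prod.snd_zero] at h2
  exact h2

end Aux2

section Aux3
variable {R : Type} [Ring R] (𝒳 : ModuleCat.{0} R → Prop)
  (h : ∀ M : ModuleCat.{0} R, ∃ (P : ModuleCat.{0} R) (φ : P ⟶ M), IsPrecover 𝒳 φ)
  (X : ChainComplex (ModuleCat.{0} R) ℤ)

lemma S_pc (n : ℕ) (C : ModuleCat.{0} R) (hC : 𝒳 C) (a : C ⟶ X.X ((n:ℤ)+1))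
    (b : C ⟶ (S 𝒳 h X n).2.1)
    (h1 : a ≫ X.d ((n:ℤ)+1) (n:ℤ) = b ≫ (S 𝒳 h X n).2.2.1)
    (h2 : b ≫ (S 𝒳 h X n).2.2.2 = 0) :
    ∃ g : C ⟶ (S 𝒳 h X (n+1)).2.1,
      g ≫ (S 𝒳 h X (n+1)).2.2.1 = a ∧ g ≫ (S 𝒳 h X (n+1)).2.2.2 = b := by
  have hmem : ∀ c : C, LinearMap.prod a.hom b.hom c ∈
      LinearMap.ker (qmap X n (S 𝒳 h X n).1 (S 𝒳 h X n).2.1 (S 𝒳 h X n).2.2.1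
        (S 𝒳 h X n).2.2.2) := by
    intro c
    rw [LinearMap.mem_ker]
    have e1 := congrArg (fun q => q c) h1
    have e2 := congrArg (fun q => q c) h2
    simp only at e1 e2
    apply Prod.ext
    · simp only [qmap, LinearMap.prod_apply, Function.prod, LinearMap.sub_apply,
        LinearMap.comp_apply, LinearMap.fst_apply, LinearMap.snd_apply, Prod.fst_zero]
      exact sub_eq_zero_of_eq e1
    · simp only [qmap, LinearMap.prod_apply, Function.prod,
        LinearMap.comp_apply, LinearMap.snd_apply, Prod.snd_zero]
      exact e2
  let u : C →ₗ[R] ↥(LinearMap.ker (qmap X n (S 𝒳 h X n).1 (S 𝒳 h X n).2.1 (S 𝒳 h X n).2.2.1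
        (S 𝒳 h X n).2.2.2)) :=
    LinearMap.codRestrict _ (LinearMap.prod a.hom b.hom) hmem
  obtain ⟨g, hg⟩ := (pc_spec 𝒳 h (ModuleCat.of R ↥(LinearMap.ker
    (qmap X n (S 𝒳 h X n).1 (S 𝒳 h X n).2.1 (S 𝒳 h X n).2.2.1 (S 𝒳 h X n).2.2.2)))).2 C hC (ModuleCat.ofHom u)
  refine ⟨g, ?_, ?_⟩
  · apply ModuleCat.hom_ext
    apply LinearMap.ext
    intro c
    have := congrArg (fun q => q c) hg
    simp only at this
    exact congrArg (fun z => z.1.1) this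
  · apply ModuleCat.hom_ext
    apply LinearMap.ext
    intro c
    have := congrArg (fun q => q c) hg
    simp only at this
    exact congrArg (fun z => z.1.2) this

end Aux3

section Aux4
variable {R : Type} [Ring R] (𝒳 : ModuleCat.{0} R → Prop)
  (h : ∀ M : ModuleCat.{0} R, ∃ (P : ModuleCat.{0} R) (φ : P ⟶ M), IsPrecover 𝒳 φ)
  (X : ChainComplex (ModuleCat.{0} R) ℤ)

lemma S_zero_D : (S 𝒳 h X 0).2.2.2 = 0 := rfl

lemma S0_pc (C : ModuleCat.{0} R) (hC : 𝒳 C) (a : C ⟶ X.X (0:ℤ)) :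
    ∃ g : C ⟶ (S 𝒳 h X 0).2.1, g ≫ (S 𝒳 h X 0).2.2.1 = a :=
  (pc_spec 𝒳 h _).2 C hC a

noncomputable def Pz : ℤ → ModuleCat.{0} R
  | .ofNat n => (S 𝒳 h X n).2.1
  | .negSucc _ => Z0 R

noncomputable def Dz : ∀ n : ℤ, Pz 𝒳 h X (n+1) ⟶ Pz 𝒳 h X n
  | .ofNat n => (S 𝒳 h X (n+1)).2.2.2
  | .negSucc 0 => 0
  | .negSucc (_+1) => 0

noncomputable def Pc : ChainComplex (ModuleCat.{0} R) ℤ where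
  X := Pz 𝒳 h X
  d i j := if hij : j + 1 = i then
      (eqToHom (congrArg (Pz 𝒳 h X) hij.symm) : Pz 𝒳 h X i ⟶ Pz 𝒳 h X (j+1)) ≫ Dz 𝒳 h X j
    else 0
  shape i j hij := dif_neg hij
  d_comp_d' i j k hij hjk := by
    simp only [ComplexShape.down_Rel] at hij hjk
    subst hij; subst hjk
    beta_reduce
    rw [dif_pos rfl, dif_pos rfl]
    simp only [eqToHom_refl, Category.id_comp]
    match k with
    | .ofNat m =>
      show Dz 𝒳 h X (Int.ofNat (m+1)) ≫ Dz 𝒳 h X (Int.ofNat m) = 0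
      show (S 𝒳 h X (m+2)).2.2.2 ≫ (S 𝒳 h X (m+1)).2.2.2 = 0
      exact S_DD 𝒳 h X (m+1)
    | .negSucc 0 =>
      show Dz 𝒳 h X (Int.ofNat 0) ≫ (0 : _ ⟶ _) = 0
      exact comp_zero
    | .negSucc (m+1) =>
      show Dz 𝒳 h X (Int.negSucc m) ≫ (0 : _ ⟶ _) = 0
      exact comp_zero

noncomputable def Phz : ∀ n : ℤ, Pz 𝒳 h X n ⟶ X.X n
  | .ofNat n => (S 𝒳 h X n).2.2.1
  | .negSucc _ => 0

end Aux4

section Aux5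
variable {R : Type} [Ring R] (𝒳 : ModuleCat.{0} R → Prop)
  (h : ∀ M : ModuleCat.{0} R, ∃ (P : ModuleCat.{0} R) (φ : P ⟶ M), IsPrecover 𝒳 φ)
  (X : ChainComplex (ModuleCat.{0} R) ℤ)
  (hX : ∀ n : ℤ, n < 0 → IsZero (X.X n))

noncomputable def Phc : Pc 𝒳 h X ⟶ X where
  f := Phz 𝒳 h X
  comm' i j hij := by
    simp only [ComplexShape.down_Rel] at hij
    subst hij
    show Phz 𝒳 h X (j+1) ≫ X.d (j+1) j = (if hij : j + 1 = j + 1 then _ ≫ Dz 𝒳 h X j else 0) ≫ Phz 𝒳 h X j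
    rw [dif_pos rfl]
    simp only [eqToHom_refl, Category.id_comp]
    match j with
    | .ofNat m =>
      show (S 𝒳 h X (m+1)).2.2.1 ≫ X.d (Int.ofNat (m+1)) (Int.ofNat m) =
        (S 𝒳 h X (m+1)).2.2.2 ≫ (S 𝒳 h X m).2.2.1
      exact S_comm 𝒳 h X m
    | .negSucc m =>
      exact (hX _ (Int.negSucc_lt_zero m)).eq_of_tgt _ _

end Aux5

section Aux6
variable {R : Type} [Ring R] (𝒳 : ModuleCat.{0} R → Prop)
  (h : ∀ M : ModuleCat.{0} R, ∃ (P : ModuleCat.{0} R) (φ : P ⟶ M), IsPrecover 𝒳 φ)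
  (X : ChainComplex (ModuleCat.{0} R) ℤ)
  (C' : ChainComplex (ModuleCat.{0} R) ℤ)
  (hC' : ∀ n : ℤ, 𝒳 (C'.X n))
  (f : C' ⟶ X)

noncomputable def gstep (n : ℕ) (gp : C'.X (n:ℤ) ⟶ (S 𝒳 h X n).2.1)
    (i1 : gp ≫ (S 𝒳 h X n).2.2.1 = f.f (n:ℤ))
    (i2 : C'.d ((n:ℤ)+1) (n:ℤ) ≫ gp ≫ (S 𝒳 h X n).2.2.2 = 0) :
    Σ' g : C'.X ((n:ℤ)+1) ⟶ (S 𝒳 h X (n+1)).2.1,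
      g ≫ (S 𝒳 h X (n+1)).2.2.1 = f.f ((n:ℤ)+1) ∧
      g ≫ (S 𝒳 h X (n+1)).2.2.2 = C'.d ((n:ℤ)+1) (n:ℤ) ≫ gp := by
  have h1 : f.f ((n:ℤ)+1) ≫ X.d ((n:ℤ)+1) (n:ℤ) =
      (C'.d ((n:ℤ)+1) (n:ℤ) ≫ gp) ≫ (S 𝒳 h X n).2.2.1 := by
    rw [f.comm ((n:ℤ)+1) (n:ℤ), Category.assoc, i1]
  have h2 : (C'.d ((n:ℤ)+1) (n:ℤ) ≫ gp) ≫ (S 𝒳 h X n).2.2.2 = 0 := by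
    rw [Category.assoc]; exact i2
  have e := S_pc 𝒳 h X n (C'.X ((n:ℤ)+1)) (hC' ((n:ℤ)+1)) (f.f ((n:ℤ)+1))
    (C'.d ((n:ℤ)+1) (n:ℤ) ≫ gp) h1 h2
  exact ⟨e.choose, e.choose_spec.1, e.choose_spec.2⟩

noncomputable def gN : ∀ n : ℕ,
    Σ' g : C'.X (n:ℤ) ⟶ (S 𝒳 h X n).2.1,
      g ≫ (S 𝒳 h X n).2.2.1 = f.f (n:ℤ) ∧
      C'.d ((n:ℤ)+1) (n:ℤ) ≫ g ≫ (S 𝒳 h X n).2.2.2 = 0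
  | 0 => ⟨(S0_pc 𝒳 h X (C'.X (0:ℤ)) (hC' 0) (f.f (0:ℤ))).choose,
      (S0_pc 𝒳 h X (C'.X (0:ℤ)) (hC' 0) (f.f (0:ℤ))).choose_spec, by
        rw [S_zero_D]; simp⟩
  | (n+1) =>
    let p := gN n
    let e := gstep 𝒳 h X C' hC' f n p.1 p.2.1 p.2.2
    ⟨e.1, e.2.1, by
      show C'.d ((n:ℤ)+1+1) ((n:ℤ)+1) ≫ e.1 ≫ (S 𝒳 h X (n+1)).2.2.2 = 0
      rw [e.2.2]
      exact (by rw [← Category.assoc, C'.d_comp_d ((n:ℤ)+1+1) ((n:ℤ)+1) (n:ℤ), zero_comp] :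
        C'.d ((n:ℤ)+1+1) ((n:ℤ)+1) ≫ C'.d ((n:ℤ)+1) (n:ℤ) ≫ p.1 = 0)⟩

lemma gN_sq (n : ℕ) :
    (gN 𝒳 h X C' hC' f (n+1)).1 ≫ (S 𝒳 h X (n+1)).2.2.2 =
      C'.d ((n:ℤ)+1) (n:ℤ) ≫ (gN 𝒳 h X C' hC' f n).1 :=
  (gstep 𝒳 h X C' hC' f n (gN 𝒳 h X C' hC' f n).1 (gN 𝒳 h X C' hC' f n).2.1
    (gN 𝒳 h X C' hC' f n).2.2).2.2

end Aux6

section Aux7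
variable {R : Type} [Ring R] (𝒳 : ModuleCat.{0} R → Prop)
  (h : ∀ M : ModuleCat.{0} R, ∃ (P : ModuleCat.{0} R) (φ : P ⟶ M), IsPrecover 𝒳 φ)
  (X : ChainComplex (ModuleCat.{0} R) ℤ)
  (C' : ChainComplex (ModuleCat.{0} R) ℤ)
  (hC' : ∀ n : ℤ, 𝒳 (C'.X n))
  (f : C' ⟶ X)

noncomputable def gzf : ∀ n : ℤ, C'.X n ⟶ Pz 𝒳 h X n
  | .ofNat m => (gN 𝒳 h X C' hC' f m).1
  | .negSucc _ => 0

noncomputable def gc : C' ⟶ Pc 𝒳 h X where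
  f := gzf 𝒳 h X C' hC' f
  comm' i j hij := by
    simp only [ComplexShape.down_Rel] at hij
    subst hij
    show gzf 𝒳 h X C' hC' f (j+1) ≫ (if hij : j + 1 = j + 1 then _ ≫ Dz 𝒳 h X j else 0) =
      C'.d (j+1) j ≫ gzf 𝒳 h X C' hC' f j
    rw [dif_pos rfl]
    simp only [eqToHom_refl, Category.id_comp]
    match j with
    | .ofNat m =>
      show (gN 𝒳 h X C' hC' f (m+1)).1 ≫ (S 𝒳 h X (m+1)).2.2.2 =
        C'.d (Int.ofNat (m+1)) (Int.ofNat m) ≫ (gN 𝒳 h X C' hC' f m).1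
      exact gN_sq 𝒳 h X C' hC' f m
    | .negSucc 0 =>
      show gzf 𝒳 h X C' hC' f 0 ≫ (0 : _ ⟶ Z0 R) = C'.d 0 (-1) ≫ (0 : _ ⟶ Z0 R)
      rw [comp_zero, comp_zero]
    | .negSucc (m+1) =>
      show gzf 𝒳 h X C' hC' f (Int.negSucc m) ≫ (0 : _ ⟶ Z0 R) =
        C'.d (Int.negSucc m) (Int.negSucc (m+1)) ≫ (0 : _ ⟶ Z0 R)
      rw [comp_zero, comp_zero]

end Aux7


/-- if `𝒳` is closed under arbitrary direct sums and every module has an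
`𝒳`-precover, then every chain complex vanishing in negative degrees has a
`C(𝒳*)`-precover. -/
theorem stmt_7 {R : Type} [Ring R] (𝒳 : ModuleCat.{0} R → Prop)
    (hsum : ∀ (ι : Type) (f : ι → ModuleCat.{0} R),
      (∀ i, 𝒳 (f i)) → 𝒳 (ModuleCat.of R (⨁ i, ↥(f i))))
    (h : ∀ M : ModuleCat.{0} R, ∃ (P : ModuleCat.{0} R) (φ : P ⟶ M), IsPrecover 𝒳 φ)
    (X : ChainComplex (ModuleCat.{0} R) ℤ)
    (hX : ∀ n : ℤ, n < 0 → IsZero (X.X n)) :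
    ∃ (P : ChainComplex (ModuleCat.{0} R) ℤ) (φ : P ⟶ X), IsPrecover (XStar 𝒳) φ := by
  refine ⟨Pc 𝒳 h X, Phc 𝒳 h X hX, ?_, ?_⟩
  · intro n
    match n with
    | .ofNat m => exact S_X 𝒳 h X m
    | .negSucc m => exact hsum Empty (myf0 R) (fun i => i.elim)
  · intro C' hC' f
    refine ⟨gc 𝒳 h X C' hC' f, ?_⟩
    apply HomologicalComplex.hom_ext
    intro n
    simp only [HomologicalComplex.comp_f]
    match n with
    | .ofNat m => exact (gN 𝒳 h X C' hC' f m).2.1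
    | .negSucc m => exact (hX _ (Int.negSucc_lt_zero m)).eq_of_tgt _ _
end

section
/- Suppose the class 𝒳 of left R-modules is closed under arbitrary direct sums. If every left R-module has an 𝒳-preenvelope, then every cochain complex of left R-modules of the form 0 → X^0 → X^1 → X^2 → ⋯ (i.e., every cochain complex whose components vanish in all negative degrees) has a C(𝒳*)-preenvelope. -/
open CategoryTheory Limits DirectSum

section AuxConstruction
variable {R : Type} [Ring R]

/-- State of the inductive construction at degree `n`. -/
structure PSt (𝒳 : ModuleCat.{0} R → Prop) (X : CochainComplex (ModuleCat.{0} R) ℤ)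
    (n : ℤ) where
  P : ModuleCat.{0} R
  A : ModuleCat.{0} R
  d : P ⟶ A
  φ : X.X n ⟶ A
  hA : 𝒳 A

variable (𝒳 : ModuleCat.{0} R → Prop)
  (h : ∀ M : ModuleCat.{0} R, ∃ (E : ModuleCat.{0} R) (φ : M ⟶ E), IsPreenvelope 𝒳 φ)
  (X : CochainComplex (ModuleCat.{0} R) ℤ)

noncomputable def pstep (n : ℤ) (t : PSt 𝒳 X n) : PSt 𝒳 X (n + 1) :=
  { P := t.A
    A := (h (pushout (X.d n (n+1)) (t.φ ≫ cokernel.π t.d))).choose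
    d := cokernel.π t.d ≫ pushout.inr _ _ ≫
      (h (pushout (X.d n (n+1)) (t.φ ≫ cokernel.π t.d))).choose_spec.choose
    φ := pushout.inl _ _ ≫
      (h (pushout (X.d n (n+1)) (t.φ ≫ cokernel.π t.d))).choose_spec.choose
    hA := (h (pushout (X.d n (n+1)) (t.φ ≫ cokernel.π t.d))).choose_spec.choose_spec.1 }

lemma pstep_dd (n : ℤ) (t : PSt 𝒳 X n) : t.d ≫ (pstep 𝒳 h X n t).d = 0 := by
  show t.d ≫ cokernel.π t.d ≫ _ = 0
  exact (cokernel.condition_assoc t.d _).trans zero_comp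

lemma pstep_comm (n : ℤ) (t : PSt 𝒳 X n) :
    t.φ ≫ (pstep 𝒳 h X n t).d = X.d n (n+1) ≫ (pstep 𝒳 h X n t).φ := by
  show t.φ ≫ cokernel.π t.d ≫ pushout.inr _ _ ≫ _ = X.d n (n+1) ≫ pushout.inl _ _ ≫ _
  exact ((Category.assoc _ _ _).symm.trans (pushout.condition_assoc _).symm)

lemma pstep_key (n : ℤ) (t : PSt 𝒳 X n) (C₀ C₁ : ModuleCat.{0} R) (hC₁ : 𝒳 C₁)
    (dC : C₀ ⟶ C₁) (g : t.A ⟶ C₀) (f' : X.X (n+1) ⟶ C₁)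
    (hz : t.d ≫ g ≫ dC = 0) (hsq : t.φ ≫ g ≫ dC = X.d n (n+1) ≫ f') :
    ∃ g' : (pstep 𝒳 h X n t).A ⟶ C₁,
      (pstep 𝒳 h X n t).φ ≫ g' = f' ∧ (pstep 𝒳 h X n t).d ≫ g' = g ≫ dC := by
  set u : cokernel t.d ⟶ C₁ := cokernel.desc t.d (g ≫ dC) hz with hu
  have hw : X.d n (n+1) ≫ f' = (t.φ ≫ cokernel.π t.d) ≫ u := by
    rw [Category.assoc, cokernel.π_desc, hsq]
  set p : pushout (X.d n (n+1)) (t.φ ≫ cokernel.π t.d) ⟶ C₁ := pushout.desc f' u hw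
  obtain ⟨g', hg'⟩ :=
    (h (pushout (X.d n (n+1)) (t.φ ≫ cokernel.π t.d))).choose_spec.choose_spec.2 C₁ hC₁ p
  refine ⟨g', ?_, ?_⟩
  · show (pushout.inl _ _ ≫ _) ≫ g' = f'
    rw [Category.assoc, hg']
    exact pushout.inl_desc _ _ _
  · show (cokernel.π t.d ≫ pushout.inr _ _ ≫ _) ≫ g' = g ≫ dC
    rw [Category.assoc, Category.assoc, hg']
    exact (congrArg (cokernel.π t.d ≫ ·) (pushout.inr_desc _ _ _)).trans (cokernel.π_desc _ _ _)

noncomputable def pbase : PSt 𝒳 X 0 :=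
  { P := ModuleCat.of R PUnit
    A := (h (X.X 0)).choose
    d := 0
    φ := (h (X.X 0)).choose_spec.choose
    hA := (h (X.X 0)).choose_spec.choose_spec.1 }

noncomputable def pseq : ∀ k : ℕ, PSt 𝒳 X (k : ℤ) :=
  fun k => Nat.rec (motive := fun k => PSt 𝒳 X (k : ℤ)) (pbase 𝒳 h X)
    (fun k ih => pstep 𝒳 h X (k : ℤ) ih) k

lemma pseq_succ (k : ℕ) : pseq 𝒳 h X (k+1) = pstep 𝒳 h X (k : ℤ) (pseq 𝒳 h X k) := rfl

/-- zero module belonging to 𝒳 (via closure under direct sums over `Empty`). -/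
noncomputable def ZM : ModuleCat.{0} R :=
  ModuleCat.of R (⨁ (i : Empty), ↥((Empty.elim i : ModuleCat.{0} R)))

lemma isZero_ZM : IsZero (ZM (R := R)) := by
  haveI : Subsingleton ((ZM (R := R)) : Type) :=
    ⟨fun a b => DFinsupp.ext (fun i => i.elim)⟩
  exact ModuleCat.isZero_of_subsingleton _

noncomputable def EX : ℤ → ModuleCat.{0} R
  | Int.ofNat k => (pseq 𝒳 h X k).A
  | Int.negSucc _ => ZM

noncomputable def Ed : ∀ n : ℤ, EX 𝒳 h X n ⟶ EX 𝒳 h X (n + 1)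
  | Int.ofNat k => (show (pseq 𝒳 h X k).A ⟶ (pseq 𝒳 h X (k+1)).A from (pseq 𝒳 h X (k+1)).d)
  | Int.negSucc 0 => 0
  | Int.negSucc (_+1) => 0

lemma Ed_sq (n : ℤ) : Ed 𝒳 h X n ≫ Ed 𝒳 h X (n + 1) = 0 := by
  rcases n with k | j
  · show (pseq 𝒳 h X (k+1)).d ≫ (pseq 𝒳 h X (k+2)).d = 0
    exact pstep_dd 𝒳 h X ((k+1 : ℕ) : ℤ) (pseq 𝒳 h X (k+1))
  · rcases j with _ | j
    · show (0 : _ ⟶ _) ≫ _ = 0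
      exact zero_comp
    · show (0 : _ ⟶ _) ≫ _ = 0
      exact zero_comp

noncomputable def EE : CochainComplex (ModuleCat.{0} R) ℤ :=
  CochainComplex.of (EX 𝒳 h X) (Ed 𝒳 h X) (Ed_sq 𝒳 h X)

noncomputable def φf : ∀ n : ℤ, X.X n ⟶ EX 𝒳 h X n
  | Int.ofNat k => (pseq 𝒳 h X k).φ
  | Int.negSucc _ => 0

lemma EE_d_eq (n : ℤ) : (EE 𝒳 h X).d n (n+1) = Ed 𝒳 h X n :=
  CochainComplex.of_d _ _ n

variable (hX : ∀ n : ℤ, n < 0 → IsZero (X.X n))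

noncomputable def φE : X ⟶ EE 𝒳 h X where
  f := φf 𝒳 h X
  comm' := by
    rintro i j (rfl : i + 1 = j)
    rw [EE_d_eq]
    rcases i with k | j
    · exact pstep_comm 𝒳 h X (k : ℤ) (pseq 𝒳 h X k)
    · rcases j with _ | j
      · show (0 : _ ⟶ _) ≫ _ = X.d _ _ ≫ _
        rw [(hX (Int.negSucc 0) (by decide)).eq_of_src (X.d _ _) 0]
        exact zero_comp.trans zero_comp.symm
      · show (0 : _ ⟶ _) ≫ (0 : _ ⟶ _) = X.d _ _ ≫ (0 : _ ⟶ _)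
        rw [zero_comp, comp_zero]

lemma EE_mem (hsum : ∀ (ι : Type) (f : ι → ModuleCat.{0} R),
      (∀ i, 𝒳 (f i)) → 𝒳 (ModuleCat.of R (⨁ i, ↥(f i)))) :
    ∀ n : ℤ, 𝒳 ((EE 𝒳 h X).X n) := by
  have hZ : 𝒳 (ZM (R := R)) := hsum Empty (fun i => Empty.elim i) (fun i => i.elim)
  rintro (k | j)
  · exact (pseq 𝒳 h X k).hA
  · exact hZ

section Factor

variable (C : CochainComplex (ModuleCat.{0} R) ℤ) (hC : ∀ n : ℤ, 𝒳 (C.X n)) (f : X ⟶ C)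
include hC

lemma gKey (k : ℕ) (g : (pseq 𝒳 h X k).A ⟶ C.X (k : ℤ))
    (h1 : (pseq 𝒳 h X k).φ ≫ g = f.f (k : ℤ))
    (h2 : (pseq 𝒳 h X k).d ≫ g ≫ C.d (k : ℤ) ((k : ℤ)+1) = 0) :
    ∃ g' : (pseq 𝒳 h X (k+1)).A ⟶ C.X ((k : ℤ)+1),
      (pseq 𝒳 h X (k+1)).φ ≫ g' = f.f ((k : ℤ)+1) ∧
      (pseq 𝒳 h X (k+1)).d ≫ g' = g ≫ C.d (k : ℤ) ((k : ℤ)+1) :=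
  pstep_key 𝒳 h X (k : ℤ) (pseq 𝒳 h X k) (C.X (k : ℤ)) (C.X ((k : ℤ)+1))
    (hC ((k : ℤ)+1)) (C.d (k : ℤ) ((k : ℤ)+1)) g (f.f ((k : ℤ)+1)) h2
    (by rw [← Category.assoc, h1]; exact f.comm (k : ℤ) ((k : ℤ)+1))

noncomputable def Tseq : ∀ k : ℕ, Σ' g : (pseq 𝒳 h X k).A ⟶ C.X (k : ℤ),
    ((pseq 𝒳 h X k).φ ≫ g = f.f (k : ℤ)) ∧
    ((pseq 𝒳 h X k).d ≫ g ≫ C.d (k : ℤ) ((k : ℤ)+1) = 0) :=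
  fun k => Nat.rec
    ⟨((h (X.X 0)).choose_spec.choose_spec.2 (C.X 0) (hC 0) (f.f 0)).choose,
      ((h (X.X 0)).choose_spec.choose_spec.2 (C.X 0) (hC 0) (f.f 0)).choose_spec,
      by show (0 : _ ⟶ _) ≫ _ = 0; exact zero_comp⟩
    (fun k ih =>
      ⟨(gKey 𝒳 h X C hC f k ih.1 ih.2.1 ih.2.2).choose,
        (gKey 𝒳 h X C hC f k ih.1 ih.2.1 ih.2.2).choose_spec.1,
        by
          rw [← Category.assoc, (gKey 𝒳 h X C hC f k ih.1 ih.2.1 ih.2.2).choose_spec.2]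
          show (ih.1 ≫ C.d (k : ℤ) ((k : ℤ)+1)) ≫ C.d ((k : ℤ)+1) (((k : ℤ)+1)+1) = 0
          rw [Category.assoc, C.d_comp_d, comp_zero]⟩) k

lemma Tcross (k : ℕ) :
    (pseq 𝒳 h X (k+1)).d ≫ (Tseq 𝒳 h X C hC f (k+1)).1 =
      (Tseq 𝒳 h X C hC f k).1 ≫ C.d (k : ℤ) ((k : ℤ)+1) :=
  (gKey 𝒳 h X C hC f k (Tseq 𝒳 h X C hC f k).1 (Tseq 𝒳 h X C hC f k).2.1
    (Tseq 𝒳 h X C hC f k).2.2).choose_spec.2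

noncomputable def gE : EE 𝒳 h X ⟶ C where
  f n := match n with
    | Int.ofNat k => (Tseq 𝒳 h X C hC f k).1
    | Int.negSucc _ => 0
  comm' := by
    rintro i j (rfl : i + 1 = j)
    rw [EE_d_eq]
    rcases i with k | j
    · exact (Tcross 𝒳 h X C hC f k).symm
    · rcases j with _ | j
      · show (0 : _ ⟶ _) ≫ _ = (0 : _ ⟶ _) ≫ _
        exact zero_comp.trans zero_comp.symm
      · show (0 : _ ⟶ _) ≫ _ = (0 : _ ⟶ _) ≫ _
        exact zero_comp.trans zero_comp.symm

lemma φE_gE : φE 𝒳 h X hX ≫ gE 𝒳 h X C hC f = f := by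
  apply HomologicalComplex.hom_ext
  rintro (k | j)
  · exact (Tseq 𝒳 h X C hC f k).2.1
  · exact (hX (Int.negSucc j) (Int.negSucc_lt_zero j)).eq_of_src _ _

end Factor

end AuxConstruction

/-- if `𝒳` is closed under arbitrary direct sums and every module has an
`𝒳`-preenvelope, then every cochain complex vanishing in negative degrees has a
`C(𝒳*)`-preenvelope. -/
theorem stmt_10 {R : Type} [Ring R] (𝒳 : ModuleCat.{0} R → Prop)
    (hsum : ∀ (ι : Type) (f : ι → ModuleCat.{0} R),
      (∀ i, 𝒳 (f i)) → 𝒳 (ModuleCat.of R (⨁ i, ↥(f i))))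
    (h : ∀ M : ModuleCat.{0} R, ∃ (E : ModuleCat.{0} R) (φ : M ⟶ E), IsPreenvelope 𝒳 φ)
    (X : CochainComplex (ModuleCat.{0} R) ℤ)
    (hX : ∀ n : ℤ, n < 0 → IsZero (X.X n)) :
    ∃ (E : CochainComplex (ModuleCat.{0} R) ℤ) (φ : X ⟶ E), IsPreenvelope (XStar 𝒳) φ := by
  refine ⟨EE 𝒳 h X, φE 𝒳 h X hX, EE_mem 𝒳 h X hsum, ?_⟩
  intro C hC f
  exact ⟨gE 𝒳 h X C hC f, φE_gE 𝒳 h X hX C hC f⟩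
end
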